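/- arXiv:2008.08349 — 9 statements merged into one kernel-verified Lean document; each statement's English description precedes it below -/
import Mathlib

section
/- For two finite graphs G1 = (V1,E1) and G2 = (V2,E2) on disjoint vertex sets, the neighborhood polynomial of the join G1 + G2 satisfies N_{G1+G2}(x) = (1+x)^{|V2|} N_{G1}(x) + (1+x)^{|V1|} N_{G2}(x) − N_{G1}(x) N_{G2}(x). -/
open Polynomial Finset
set_option maxHeartbeats 1000000
open scoped Classical

variable {V : Type*}

noncomputable def nbhdPoly [Fintype V] (G : SimpleGraph V) : Polynomial ℤ :=
  ∑ U ∈ univ.filter (fun U : Finset V => ∃ v, ∀ u ∈ U, G.Adj v u), X ^ U.card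

/-- Join of two graphs on disjoint vertex sets: both graphs plus all edges in between. -/
def joinGraph {V1 V2 : Type*} (G1 : SimpleGraph V1) (G2 : SimpleGraph V2) :
    SimpleGraph (V1 ⊕ V2) where
  Adj x y := match x, y with
    | .inl a, .inl b => G1.Adj a b
    | .inr a, .inr b => G2.Adj a b
    | .inl _, .inr _ => True
    | .inr _, .inl _ => True
  symm := ⟨by rintro (a|a) (b|b) h <;> simp_all <;> exact h.symm⟩
  loopless := ⟨by rintro (a|a) h <;> simp_all⟩

lemma nbhdPoly_eq [Fintype V] (G : SimpleGraph V) :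
    nbhdPoly G = ∑ U : Finset V,
      if ∃ v, ∀ u ∈ U, G.Adj v u then (X : Polynomial ℤ) ^ U.card else 0 := by
  rw [nbhdPoly, sum_filter]

lemma one_add_X_pow_card {α : Type*} [Fintype α] :
    ((1 + X : Polynomial ℤ)) ^ Fintype.card α = ∑ U : Finset α, (X : Polynomial ℤ) ^ U.card := by
  have := Finset.prod_add (fun _ : α => (X : Polynomial ℤ)) (fun _ => 1) univ
  simp only [prod_const_one, mul_one, prod_const] at this
  rw [add_comm, ← Finset.card_univ, this, Finset.powerset_univ]

/-- `N_{G1+G2}(x) = (1+x)^{|V2|} N_{G1}(x) + (1+x)^{|V1|} N_{G2}(x)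
− N_{G1}(x) N_{G2}(x)`. -/
theorem nbhdPoly_join {V1 V2 : Type*} [Fintype V1] [Fintype V2]
    (G1 : SimpleGraph V1) (G2 : SimpleGraph V2) :
    nbhdPoly (joinGraph G1 G2) =
      (1 + X) ^ Fintype.card V2 * nbhdPoly G1 + (1 + X) ^ Fintype.card V1 * nbhdPoly G2
        - nbhdPoly G1 * nbhdPoly G2 := by
  have key : nbhdPoly (joinGraph G1 G2) =
      ∑ p : Finset V1 × Finset V2,
        if (∃ a, ∀ u ∈ p.1, G1.Adj a u) ∨ (∃ b, ∀ u ∈ p.2, G2.Adj b u) then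
          (X : Polynomial ℤ) ^ (p.1.card + p.2.card) else 0 := by
    rw [nbhdPoly_eq]
    refine Fintype.sum_equiv
      ⟨fun U => (U.toLeft, U.toRight), fun p => p.1.disjSum p.2,
        fun U => Finset.toLeft_disjSum_toRight,
        fun p => by simp⟩ _ _ (fun U => ?_)
    simp only [Equiv.coe_fn_mk]
    rw [Finset.card_toLeft_add_card_toRight]
    have hiff : (∃ v, ∀ u ∈ U, (joinGraph G1 G2).Adj v u) ↔
        ((∃ a, ∀ u ∈ U.toLeft, G1.Adj a u) ∨ ∃ b, ∀ u ∈ U.toRight, G2.Adj b u) := by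
      constructor
      · rintro ⟨(a | b), h⟩
        · exact Or.inl ⟨a, fun u hu => h (Sum.inl u) (by simpa using hu)⟩
        · exact Or.inr ⟨b, fun u hu => h (Sum.inr u) (by simpa using hu)⟩
      · rintro (⟨a, h⟩ | ⟨b, h⟩)
        · refine ⟨Sum.inl a, ?_⟩
          rintro (u | u) hu
          · exact h u (by simpa using hu)
          · trivial
        · refine ⟨Sum.inr b, ?_⟩
          rintro (u | u) hu
          · trivial
          · exact h u (by simpa using hu)
    simp only [hiff]
  rw [key, Fintype.sum_prod_type]
  have expand : ∀ (p : Finset V1 × Finset V2),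
      (if (∃ a, ∀ u ∈ p.1, G1.Adj a u) ∨ (∃ b, ∀ u ∈ p.2, G2.Adj b u) then
          (X : Polynomial ℤ) ^ (p.1.card + p.2.card) else 0) =
        (X : Polynomial ℤ) ^ p.2.card *
            (if ∃ a, ∀ u ∈ p.1, G1.Adj a u then (X : Polynomial ℤ) ^ p.1.card else 0)
          + (X : Polynomial ℤ) ^ p.1.card *
            (if ∃ b, ∀ u ∈ p.2, G2.Adj b u then (X : Polynomial ℤ) ^ p.2.card else 0)
          - (if ∃ a, ∀ u ∈ p.1, G1.Adj a u then (X : Polynomial ℤ) ^ p.1.card else 0) *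
            (if ∃ b, ∀ u ∈ p.2, G2.Adj b u then (X : Polynomial ℤ) ^ p.2.card else 0) := by
    intro p
    by_cases h1 : ∃ a, ∀ u ∈ p.1, G1.Adj a u <;>
      by_cases h2 : ∃ b, ∀ u ∈ p.2, G2.Adj b u <;>
      simp [h1, h2, pow_add] <;> ring
  simp only [expand]
  rw [one_add_X_pow_card (α := V2), one_add_X_pow_card (α := V1),
    nbhdPoly_eq G1, nbhdPoly_eq G2, Finset.sum_mul_sum, Finset.sum_mul_sum,
    Finset.sum_mul_sum]
  conv_rhs => rw [Finset.sum_comm]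
  rw [← Finset.sum_add_distrib, ← Finset.sum_sub_distrib]
  refine Finset.sum_congr rfl fun U1 _ => ?_
  rw [← Finset.sum_add_distrib, ← Finset.sum_sub_distrib]
  refine Finset.sum_congr rfl fun U2 _ => ?_
  have h := expand (U1, U2)
  dsimp only at h
  exact h
end

section
/- For every finite graph G = (V,E) and its complement graph Ḡ, the domination polynomial of Ḡ and the neighborhood polynomial of G satisfy D_{Ḡ}(x) + N_G(x) = (1+x)^{|V|}. -/
open Polynomial Finset
open scoped Classical

variable {V : Type*}

noncomputable def domPoly [Fintype V] (G : SimpleGraph V) : Polynomial ℤ :=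
  ∑ D ∈ univ.filter (fun D : Finset V => ∀ v : V, v ∈ D ∨ ∃ d ∈ D, G.Adj d v), X ^ D.card

/-- `D_{Ḡ}(x) + N_G(x) = (1+x)^{|V|}`. -/
theorem domPoly_compl_add_nbhdPoly [Fintype V] (G : SimpleGraph V) :
    domPoly Gᶜ + nbhdPoly G = (1 + X) ^ Fintype.card V := by
  classical
  have key : ∀ S : Finset V,
      (¬ ∀ v : V, v ∈ S ∨ ∃ d ∈ S, Gᶜ.Adj d v) ↔ ∃ v, ∀ u ∈ S, G.Adj v u := by
    intro S
    push_neg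
    constructor
    · rintro ⟨v, hv, hd⟩
      refine ⟨v, fun u hu => ?_⟩
      have := hd u hu
      rw [SimpleGraph.compl_adj] at this
      push_neg at this
      have hne : u ≠ v := fun h => hv (h ▸ hu)
      exact (G.adj_symm (this hne))
    · rintro ⟨v, hv⟩
      refine ⟨v, fun hvS => G.irrefl (hv v hvS), fun d hd => ?_⟩
      rw [SimpleGraph.compl_adj]
      push_neg
      intro _
      exact G.adj_symm (hv d hd)
  unfold domPoly nbhdPoly
  have hfilter : (univ.filter (fun U : Finset V => ∃ v, ∀ u ∈ U, G.Adj v u)) =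
      univ.filter (fun D : Finset V => ¬ ∀ v : V, v ∈ D ∨ ∃ d ∈ D, Gᶜ.Adj d v) := by
    apply Finset.filter_congr
    intro S _
    exact (key S).symm
  rw [hfilter, Finset.sum_filter_add_sum_filter_not]
  have h2 := Finset.prod_add (fun _ : V => (X : Polynomial ℤ)) (fun _ : V => (1 : Polynomial ℤ)) univ
  simp only [Finset.prod_const, Finset.prod_const_one, mul_one, one_pow, Finset.powerset_univ,
    Finset.card_univ] at h2
  rw [add_comm (1 : Polynomial ℤ) X, h2]
end

section
/- Let C be a clique in a finite graph G and C_max a maximal clique containing C. Then the family of anchor sets of C equals {A ∩ C : A ∈ A_G(C_max), A ∩ C ≠ ∅}. -/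
open Polynomial Finset
open scoped Classical

variable {V : Type*}

/-- The periphery of a clique: vertices outside `C` adjacent to some vertex of `C`. -/
noncomputable def periphery [Fintype V] (G : SimpleGraph V) (C : Finset V) : Finset V :=
  univ.filter fun v => v ∉ C ∧ ∃ c ∈ C, G.Adj c v

/-- The anchor set of a periphery set `M`: the common neighborhood of `M` inside `C`
(equal to `C` when `M = ∅`). -/
noncomputable def anchorSet (G : SimpleGraph V) (M C : Finset V) : Finset V :=
  C.filter fun c => ∀ w ∈ M, G.Adj w c

/-- The anchor family of a clique `C`: all nonempty subsets of `C` arising as anchor sets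
of periphery sets. -/
noncomputable def anchorFamily [Fintype V] (G : SimpleGraph V) (C : Finset V) : Finset (Finset V) :=
  univ.filter fun A => A.Nonempty ∧ ∃ M ⊆ periphery G C, A = anchorSet G M C

/-- `C` is a maximal clique of `G`. -/
def IsMaxClique' (G : SimpleGraph V) (C : Finset V) : Prop :=
  G.IsClique ↑C ∧ ∀ D : Finset V, G.IsClique ↑D → C ⊆ D → C = D

/-- the anchor family of a clique  contained in a maximal clique 
equals `{A ∩ C : A ∈ A_G(C_max), A ∩ C ≠ ∅}`. -/
theorem anchorFamily_eq_of_maxClique [Fintype V] (G : SimpleGraph V) (C Cmax : Finset V)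
    (hC : G.IsClique ↑C) (hmax : IsMaxClique' G Cmax) (hsub : C ⊆ Cmax) :
    anchorFamily G C =
      ((anchorFamily G Cmax).image (fun A => A ∩ C)).filter Finset.Nonempty := by
  have hK := hmax.1
  have hadj : ∀ x ∈ Cmax, ∀ c ∈ Cmax, x ≠ c → G.Adj x c := fun x hx c hc hne =>
    hK (mem_coe.mpr hx) (mem_coe.mpr hc) hne
  ext B
  simp only [anchorFamily, mem_filter, mem_univ, true_and, mem_image]
  constructor
  · rintro ⟨hBne, M, hM, rfl⟩
    have hMper : ∀ w ∈ M, w ∉ C ∧ ∃ c ∈ C, G.Adj c w := by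
      intro w hw
      have := hM hw
      simpa [periphery] using this
    refine ⟨⟨anchorSet G (M \ Cmax) Cmax, ⟨?_, M \ Cmax, ?_, rfl⟩, ?_⟩, hBne⟩
    · -- nonempty
      obtain ⟨b, hb⟩ := hBne
      refine ⟨b, ?_⟩
      simp only [anchorSet, mem_filter] at hb ⊢
      exact ⟨hsub hb.1, fun w hw => hb.2 w (mem_sdiff.mp hw).1⟩
    · -- M \ Cmax ⊆ periphery G Cmax
      intro w hw
      rw [mem_sdiff] at hw
      obtain ⟨hwC, c, hc, hcw⟩ := hMper w hw.1
      simp only [periphery, mem_filter, mem_univ, true_and]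
      exact ⟨hw.2, c, hsub hc, hcw⟩
    · -- anchorSet G (M \ Cmax) Cmax ∩ C = anchorSet G M C
      ext c
      simp only [anchorSet, mem_inter, mem_filter, mem_sdiff]
      constructor
      · rintro ⟨⟨hcmax, h⟩, hcC⟩
        refine ⟨hcC, fun w hw => ?_⟩
        by_cases hwmax : w ∈ Cmax
        · exact hadj w hwmax c hcmax (fun he => (hMper w hw).1 (he ▸ hcC))
        · exact h w ⟨hw, hwmax⟩
      · rintro ⟨hcC, h⟩
        exact ⟨⟨hsub hcC, fun w hw => h w hw.1⟩, hcC⟩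
  · rintro ⟨⟨A, ⟨hAne, M, hM, rfl⟩, rfl⟩, hBne⟩
    obtain ⟨a, ha⟩ := hBne
    rw [mem_inter] at ha
    obtain ⟨haA, haC⟩ := ha
    have haAnch : a ∈ Cmax ∧ ∀ w ∈ M, G.Adj w a := by
      simpa [anchorSet] using haA
    have hMper : ∀ w ∈ M, w ∉ Cmax := by
      intro w hw
      have := hM hw
      simp only [periphery, mem_filter, mem_univ, true_and] at this
      exact this.1
    refine ⟨⟨a, mem_inter.mpr ⟨haA, haC⟩⟩, M ∪ (Cmax \ C), ?_, ?_⟩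
    · -- subset of periphery G C
      intro w hw
      simp only [periphery, mem_filter, mem_univ, true_and]
      rcases mem_union.mp hw with hw | hw
      · exact ⟨fun hwC => hMper w hw (hsub hwC), a, haC, (haAnch.2 w hw).symm⟩
      · rw [mem_sdiff] at hw
        exact ⟨hw.2, a, haC, hadj a haAnch.1 w hw.1 (fun he => hw.2 (he ▸ haC))⟩
    · -- equality
      ext c
      simp only [anchorSet, mem_inter, mem_filter, mem_union, mem_sdiff]
      constructor
      · rintro ⟨⟨hcmax, h⟩, hcC⟩
        refine ⟨hcC, fun w hw => ?_⟩
        rcases hw with hw | hw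
        · exact h w hw
        · exact hadj w hw.1 c hcmax (fun he => hw.2 (he ▸ hcC))
      · rintro ⟨hcC, h⟩
        exact ⟨⟨hsub hcC, fun w hw => h w (Or.inl hw)⟩, hcC⟩
end

section
/- Let C be a clique of a finite graph G and A ∈ A_G(C) an anchor set. Then the generating function of N_G(A,C) is N_G(A,C,x) = P_G(A,C,x) · ((1+x)^{|C|} − x^{|A|}(1+x)^{|C|−|A|}). -/
open Polynomial Finset
open scoped Classical

variable {V : Type*}

/-- The local neighborhood of `C`: all vertex sets having a common neighbor in `C`. -/
noncomputable def localNbhd [Fintype V] (G : SimpleGraph V) (C : Finset V) : Finset (Finset V) :=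
  univ.filter fun W : Finset V => ∃ v ∈ C, ∀ u ∈ W, G.Adj v u

/-- The periphery polynomial `P_G(A,C,x)`. -/
noncomputable def periphPoly [Fintype V] (G : SimpleGraph V) (A C : Finset V) : Polynomial ℤ :=
  ∑ M ∈ (periphery G C).powerset.filter (fun M => anchorSet G M C = A), X ^ M.card

/-- The generating function `N_G(A,C,x)` of the family `N_G(A,C)`. -/
noncomputable def nbhdAnchorPoly [Fintype V] (G : SimpleGraph V) (A C : Finset V) : Polynomial ℤ :=
  ∑ N ∈ (localNbhd G C).filter (fun N => anchorSet G (N ∩ periphery G C) C = A), X ^ N.card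

lemma mem_anchorSet_iff (G : SimpleGraph V) (M C : Finset V) (v : V) :
    v ∈ anchorSet G M C ↔ v ∈ C ∧ ∀ w ∈ M, G.Adj w v := by
  simp [anchorSet]

lemma mem_localNbhd_iff [Fintype V] (G : SimpleGraph V) (C N : Finset V) :
    N ∈ localNbhd G C ↔ ∃ v ∈ C, ∀ u ∈ N, G.Adj v u := by
  simp [localNbhd]

/-- `N_G(A,C,x) = P_G(A,C,x)·((1+x)^{|C|} − x^{|A|}(1+x)^{|C|−|A|})`. -/
theorem nbhdAnchorPoly_eq [Fintype V] (G : SimpleGraph V) (A C : Finset V)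
    (hC : G.IsClique ↑C) (hA : A ∈ anchorFamily G C) :
    nbhdAnchorPoly G A C =
      periphPoly G A C * ((1 + X) ^ C.card - X ^ A.card * (1 + X) ^ (C.card - A.card)) := by
  classical
  have hA' : A.Nonempty ∧ ∃ M ⊆ periphery G C, A = anchorSet G M C := by
    simpa [anchorFamily] using hA
  obtain ⟨hAne, M0, hM0, hAeq⟩ := hA'
  have hAC : A ⊆ C := fun x hx => ((mem_anchorSet_iff G M0 C x).1 (hAeq ▸ hx)).1
  set P := periphery G C with hP
  have hdisj : Disjoint C P := by
    rw [Finset.disjoint_right]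
    intro v hvP hvC
    exact ((Finset.mem_filter.1 hvP).2.1 hvC)
  -- The second factor equals the generating function of subsets of C not containing A
  have hpow : ∀ D : Finset V, ((1 : Polynomial ℤ) + X) ^ D.card
      = ∑ S ∈ D.powerset, X ^ S.card := by
    intro D
    rw [add_comm]
    calc ((X : Polynomial ℤ) + 1) ^ D.card = ∏ _i ∈ D, (X + 1) := by rw [Finset.prod_const]
      _ = ∑ t ∈ D.powerset, (∏ _i ∈ t, (X : Polynomial ℤ)) * ∏ _i ∈ D \ t, 1 :=
        Finset.prod_add _ _ _
      _ = ∑ S ∈ D.powerset, X ^ S.card := by simp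
  have h2 : ∑ S ∈ C.powerset.filter (fun S => A ⊆ S), (X : Polynomial ℤ) ^ S.card
      = X ^ A.card * (1 + X) ^ (C.card - A.card) := by
    rw [← Finset.card_sdiff_of_subset hAC, hpow, Finset.mul_sum]
    refine Finset.sum_nbij' (fun S => S \ A) (fun T => A ∪ T) ?_ ?_ ?_ ?_ ?_
    · intro S hS
      obtain ⟨hS1, hS2⟩ := Finset.mem_filter.1 hS
      exact Finset.mem_powerset.2 (Finset.sdiff_subset_sdiff (Finset.mem_powerset.1 hS1)
        Finset.Subset.rfl)
    · intro T hT
      have hT' := Finset.mem_powerset.1 hT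
      refine Finset.mem_filter.2 ⟨Finset.mem_powerset.2 ?_, Finset.subset_union_left⟩
      exact Finset.union_subset hAC (hT'.trans (Finset.sdiff_subset))
    · intro S hS
      obtain ⟨-, hS2⟩ := Finset.mem_filter.1 hS
      exact Finset.union_sdiff_of_subset hS2
    · intro T hT
      have hT' := Finset.mem_powerset.1 hT
      have : Disjoint A T := Finset.disjoint_of_subset_right hT' Finset.sdiff_disjoint.symm
      exact Finset.union_sdiff_cancel_left this
    · intro S hS
      obtain ⟨-, hS2⟩ := Finset.mem_filter.1 hS
      rw [← pow_add]
      congr 1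
      have := Finset.card_le_card hS2
      rw [Finset.card_sdiff_of_subset hS2]
      omega
  have hfac : ((1 : Polynomial ℤ) + X) ^ C.card - X ^ A.card * (1 + X) ^ (C.card - A.card)
      = ∑ S ∈ C.powerset.filter (fun S => ¬ A ⊆ S), X ^ S.card := by
    rw [hpow, ← h2, ← Finset.sum_filter_add_sum_filter_not C.powerset (fun S => A ⊆ S)]
    ring
  rw [hfac, periphPoly, Finset.sum_mul_sum]
  rw [← Finset.sum_product']
  -- now a bijection between N and pairs (M, S) = (N ∩ P, N ∩ C)
  rw [nbhdAnchorPoly]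
  refine Finset.sum_nbij' (fun N => (N ∩ P, N ∩ C)) (fun p => p.1 ∪ p.2) ?_ ?_ ?_ ?_ ?_
  · intro N hN
    obtain ⟨hN1, hN2⟩ := Finset.mem_filter.1 hN
    obtain ⟨v, hvC, hv⟩ := (mem_localNbhd_iff G C N).1 hN1
    refine Finset.mem_product.2 ⟨Finset.mem_filter.2 ⟨Finset.mem_powerset.2
      Finset.inter_subset_right, hN2⟩, Finset.mem_filter.2 ⟨Finset.mem_powerset.2
      Finset.inter_subset_right, ?_⟩⟩
    intro hsub
    have hvA : v ∈ A := by
      rw [← hN2, mem_anchorSet_iff]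
      exact ⟨hvC, fun w hw => (hv w (Finset.mem_inter.1 hw).1).symm⟩
    have := hv v (Finset.mem_inter.1 (hsub hvA)).1
    exact G.loopless.irrefl v this
  · intro p hp
    obtain ⟨hp1, hp2⟩ := Finset.mem_product.1 hp
    obtain ⟨hM1, hM2⟩ := Finset.mem_filter.1 hp1
    obtain ⟨hS1, hS2⟩ := Finset.mem_filter.1 hp2
    have hMP : p.1 ⊆ P := Finset.mem_powerset.1 hM1
    have hSC : p.2 ⊆ C := Finset.mem_powerset.1 hS1
    have hunion : (p.1 ∪ p.2) ∩ P = p.1 := by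
      rw [Finset.union_inter_distrib_right]
      rw [Finset.inter_eq_left.2 hMP]
      rw [Finset.disjoint_iff_inter_eq_empty.1 (Finset.disjoint_of_subset_left hSC hdisj),
        Finset.union_empty]
    obtain ⟨v, hvA, hvS⟩ := Finset.not_subset.1 hS2
    have hvC : v ∈ C := hAC hvA
    refine Finset.mem_filter.2 ⟨(mem_localNbhd_iff G C _).2 ⟨v, hvC, ?_⟩, by
      rw [hunion, hM2]⟩
    intro u hu
    rcases Finset.mem_union.1 hu with hu | hu
    · have : v ∈ anchorSet G p.1 C := hM2 ▸ hvA
      exact (((mem_anchorSet_iff G p.1 C v).1 this).2 u hu).symm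
    · refine hC hvC (hSC hu) ?_
      rintro rfl; exact hvS hu
  · intro N hN
    obtain ⟨hN1, hN2⟩ := Finset.mem_filter.1 hN
    obtain ⟨v, hvC, hv⟩ := (mem_localNbhd_iff G C N).1 hN1
    have hNsub : N ⊆ C ∪ P := by
      intro u hu
      by_cases huC : u ∈ C
      · exact Finset.mem_union_left _ huC
      · refine Finset.mem_union_right _ (Finset.mem_filter.2 ⟨Finset.mem_univ _,
          huC, v, hvC, hv u hu⟩)
    simp only
    rw [← Finset.inter_union_distrib_left, Finset.union_comm P C,
      Finset.inter_eq_left.2 hNsub]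
  · intro p hp
    obtain ⟨hp1, hp2⟩ := Finset.mem_product.1 hp
    have hMP : p.1 ⊆ P := Finset.mem_powerset.1 (Finset.mem_filter.1 hp1).1
    have hSC : p.2 ⊆ C := Finset.mem_powerset.1 (Finset.mem_filter.1 hp2).1
    have e1 : (p.1 ∪ p.2) ∩ P = p.1 := by
      rw [Finset.union_inter_distrib_right, Finset.inter_eq_left.2 hMP,
        Finset.disjoint_iff_inter_eq_empty.1 (Finset.disjoint_of_subset_left hSC hdisj),
        Finset.union_empty]
    have e2 : (p.1 ∪ p.2) ∩ C = p.2 := by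
      rw [Finset.union_inter_distrib_right, Finset.inter_eq_left.2 hSC,
        Finset.disjoint_iff_inter_eq_empty.1 (Finset.disjoint_of_subset_left hMP hdisj.symm),
        Finset.empty_union]
    simp [e1, e2]
  · intro N hN
    obtain ⟨hN1, hN2⟩ := Finset.mem_filter.1 hN
    obtain ⟨v, hvC, hv⟩ := (mem_localNbhd_iff G C N).1 hN1
    have hNsub : N ⊆ C ∪ P := by
      intro u hu
      by_cases huC : u ∈ C
      · exact Finset.mem_union_left _ huC
      · exact Finset.mem_union_right _ (Finset.mem_filter.2 ⟨Finset.mem_univ _,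
          huC, v, hvC, hv u hu⟩)
    have hNeq : N ∩ P ∪ N ∩ C = N := by
      rw [← Finset.inter_union_distrib_left, Finset.union_comm P C,
        Finset.inter_eq_left.2 hNsub]
    have : (N ∩ P).card + (N ∩ C).card = N.card := by
      rw [← Finset.card_union_of_disjoint (hdisj.symm.mono
        Finset.inter_subset_right Finset.inter_subset_right), hNeq]
    rw [← pow_add, this]
end

section
/- Let C be a clique of a finite graph G and A ∈ A_G(C). Then every N ∈ N_G(A,C) decomposes uniquely as N = M ∪ X where M = N ∩ P_G(C) ∈ P_G(A,C) and X = N ∩ C is a subset of C that does not contain A; conversely every such union M ∪ X lies in N_G(A,C). -/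
open Polynomial Finset
open scoped Classical

variable {V : Type*}

/-- The family `N_G(A,C)` of sets with a common neighbor in `C` whose periphery part has
anchor set `A`. -/
noncomputable def nbhdAnchor [Fintype V] (G : SimpleGraph V) (A C : Finset V) :
    Finset (Finset V) :=
  (localNbhd G C).filter fun N => anchorSet G (N ∩ periphery G C) C = A

/-- every `N ∈ N_G(A,C)` decomposes uniquely as `N = M ∪ X` with
`M = N ∩ P_G(C) ∈ P_G(A,C)` and `X = N ∩ C ⊆ C` not containing `A`; conversely every
such union lies in `N_G(A,C)`. -/
theorem nbhdAnchor_decomposition [Fintype V] (G : SimpleGraph V) (A C : Finset V)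
    (hC : G.IsClique ↑C) (hA : A ∈ anchorFamily G C) :
    (∀ N ∈ nbhdAnchor G A C,
      (N ∩ periphery G C) ∈ (periphery G C).powerset.filter (fun M => anchorSet G M C = A) ∧
      N ∩ C ⊆ C ∧ ¬ A ⊆ N ∩ C ∧ N = (N ∩ periphery G C) ∪ (N ∩ C)) ∧
    (∀ M X' : Finset V,
      M ∈ (periphery G C).powerset.filter (fun M => anchorSet G M C = A) →
      X' ⊆ C → ¬ A ⊆ X' → M ∪ X' ∈ nbhdAnchor G A C) := by
  constructor
  · intro N hN
    simp only [nbhdAnchor, mem_filter] at hN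
    obtain ⟨hloc, hanc⟩ := hN
    simp only [localNbhd, mem_filter, mem_univ, true_and] at hloc
    obtain ⟨v, hvC, hv⟩ := hloc
    refine ⟨by simp [mem_filter, inter_subset_right, hanc], inter_subset_right, ?_, ?_⟩
    · intro hsub
      -- v ∈ anchorSet of N ∩ periphery = A
      have hvA : v ∈ A := by
        rw [← hanc]
        simp only [anchorSet, mem_filter]
        exact ⟨hvC, fun w hw => (hv w (mem_inter.mp hw).1).symm⟩
      have hvN : v ∈ N := (mem_inter.mp (hsub hvA)).1
      exact G.irrefl (hv v hvN)
    · rw [← inter_union_distrib_left]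
      refine (inter_eq_left.mpr fun u hu => ?_).symm
      by_cases huC : u ∈ C
      · exact mem_union_right _ huC
      · refine mem_union_left _ ?_
        simp only [periphery, mem_filter, mem_univ, true_and]
        exact ⟨huC, v, hvC, hv u hu⟩
  · intro M X' hM hX' hAX'
    simp only [mem_filter, mem_powerset] at hM
    obtain ⟨hMP, hMA⟩ := hM
    obtain ⟨v, hvA, hvX'⟩ := not_subset.mp hAX'
    have hvanc := hvA
    rw [← hMA] at hvanc
    simp only [anchorSet, mem_filter] at hvanc
    obtain ⟨hvC, hvadj⟩ := hvanc
    have hXP : X' ∩ periphery G C = ∅ := by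
      rw [eq_empty_iff_forall_notMem]
      intro x hx
      obtain ⟨hx1, hx2⟩ := mem_inter.mp hx
      simp only [periphery, mem_filter, mem_univ, true_and] at hx2
      exact hx2.1 (hX' hx1)
    simp only [nbhdAnchor, mem_filter, localNbhd, mem_univ, true_and]
    constructor
    · refine ⟨v, hvC, fun u hu => ?_⟩
      rcases mem_union.mp hu with h | h
      · exact (hvadj u h).symm
      · exact hC hvC (hX' h) (fun he => hvX' (he ▸ h))
    · rw [union_inter_distrib_right, inter_eq_left.mpr hMP, hXP, union_empty, hMA]
end

section
/- Let G = (V,E) be a finite graph, C a clique of G, and v ∉ V. Then the neighborhood polynomial of the graph G_{C▷v} obtained by attaching v to C satisfies N_{G_{C▷v}}(x) = N_G(x) + φ_G(C) + x·Σ_{A ∈ A_G(C)} P_G(A,C,x)·((1+x)^{|C|} − x^{|A|}(1+x)^{|C|−|A|}), where φ_G(C) = x^{|C|} if C is a maximal clique of G and 0 otherwise. -/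
open Polynomial Finset
open scoped Classical

variable {V : Type*}

/-- The graph obtained by attaching a new vertex (`none`) to the vertex set `U` of `G`. -/
def attachVertex (G : SimpleGraph V) (U : Finset V) : SimpleGraph (Option V) where
  Adj x y := match x, y with
    | some a, some b => G.Adj a b
    | some a, none => a ∈ U
    | none, some b => b ∈ U
    | none, none => False
  symm := ⟨by rintro (_|a) (_|b) h <;> simp_all <;> exact h.symm⟩
  loopless := ⟨by rintro (_|a) h <;> simp_all⟩

lemma sum_pow_powerset (C : Finset V) :
    ∑ S ∈ C.powerset, (X : Polynomial ℤ) ^ S.card = (1 + X) ^ C.card := by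
  simpa [add_comm] using Finset.sum_pow_mul_eq_add_pow (X : Polynomial ℤ) 1 C

lemma sum_pow_supersets {A C : Finset V} (hAC : A ⊆ C) :
    ∑ S ∈ C.powerset.filter (fun S => A ⊆ S), (X : Polynomial ℤ) ^ S.card
      = X ^ A.card * (1 + X) ^ (C.card - A.card) := by
  rw [← card_sdiff_of_subset hAC, ← sum_pow_powerset (C \ A), Finset.mul_sum]
  refine Finset.sum_nbij' (fun S => S \ A) (fun T => A ∪ T) ?_ ?_ ?_ ?_ ?_
  · intro S hS
    simp only [mem_filter, mem_powerset] at hS ⊢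
    exact sdiff_subset_sdiff hS.1 le_rfl
  · intro T hT
    simp only [mem_powerset] at hT
    simp only [mem_filter, mem_powerset]
    exact ⟨union_subset hAC (hT.trans (sdiff_subset)), subset_union_left⟩
  · intro S hS
    simp only [mem_filter, mem_powerset] at hS
    exact union_sdiff_of_subset hS.2
  · intro T hT
    simp only [mem_powerset] at hT
    exact union_sdiff_cancel_left (disjoint_sdiff_self_right.mono_right hT)
  · intro S hS
    simp only [mem_filter, mem_powerset] at hS
    rw [← pow_add]
    congr 1
    show #S = #A + #(S \ A)
    have := card_sdiff_add_card_eq_card hS.2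
    omega

lemma sum_pow_not_supersets {A C : Finset V} (hAC : A ⊆ C) :
    ∑ S ∈ C.powerset.filter (fun S => ¬ A ⊆ S), (X : Polynomial ℤ) ^ S.card
      = (1 + X) ^ C.card - X ^ A.card * (1 + X) ^ (C.card - A.card) := by
  have h := Finset.sum_filter_add_sum_filter_not C.powerset (fun S => A ⊆ S)
    (fun S => (X : Polynomial ℤ) ^ S.card)
  rw [sum_pow_supersets hAC, sum_pow_powerset] at h
  linear_combination h

set_option maxHeartbeats 1000000 in
lemma attach_split [Fintype V] (G : SimpleGraph V) (C : Finset V) :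
    nbhdPoly (attachVertex G C) =
      (∑ U ∈ univ.filter (fun U : Finset V => (∃ v, ∀ u ∈ U, G.Adj v u) ∨ U ⊆ C), X ^ U.card)
        + X * ∑ U ∈ univ.filter (fun U : Finset V => ∃ a ∈ C, ∀ u ∈ U, G.Adj a u), X ^ U.card := by
  rw [nbhdPoly]
  refine Eq.trans (Finset.sum_filter_add_sum_filter_not _
      (fun S : Finset (Option V) => none ∉ S) _).symm ?_
  congr 1
  · -- sets not containing none
    refine Finset.sum_nbij' (fun S => S.eraseNone) (fun U => U.map Function.Embedding.some)
      ?_ ?_ ?_ ?_ ?_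
    · intro S hS
      simp only [mem_filter, mem_univ, true_and] at hS ⊢
      obtain ⟨⟨w, hw⟩, hnone⟩ := hS
      match w with
      | none =>
        right
        intro x hx
        exact hw (some x) (mem_eraseNone.1 hx)
      | some a =>
        left
        exact ⟨a, fun x hx => hw (some x) (mem_eraseNone.1 hx)⟩
    · intro U hU
      simp only [mem_filter, mem_univ, true_and] at hU ⊢
      constructor
      · rcases hU with ⟨v, hv⟩ | hsub
        · refine ⟨some v, fun u hu => ?_⟩
          match u with
          | some x => exact hv x (by simpa using hu)
          | none => simp at hu
        · refine ⟨none, fun u hu => ?_⟩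
          match u with
          | some x => exact hsub (by simpa using hu)
          | none => simp at hu
      · simp
    · intro S hS
      simp only [mem_filter, mem_univ, true_and] at hS
      show (S.eraseNone).map Function.Embedding.some = S
      rw [Finset.map_some_eraseNone, Finset.erase_eq_of_notMem hS.2]
    · intro U hU
      exact Finset.eraseNone_map_some U
    · intro S hS
      simp only [mem_filter, mem_univ, true_and] at hS
      show (X : Polynomial ℤ) ^ S.card = X ^ S.eraseNone.card
      congr 1
      conv_lhs => rw [← Finset.erase_eq_of_notMem hS.2, ← Finset.map_some_eraseNone]
      rw [Finset.card_map]
  · -- sets containing none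
    rw [Finset.mul_sum]
    refine Finset.sum_nbij' (fun S => S.eraseNone) (fun U => insert none (U.map Function.Embedding.some))
      ?_ ?_ ?_ ?_ ?_
    · intro S hS
      simp only [mem_filter, mem_univ, true_and, not_not] at hS ⊢
      obtain ⟨⟨w, hw⟩, hnone⟩ := hS
      match w with
      | none => exact absurd (hw none hnone) (by simp [attachVertex])
      | some a =>
        refine ⟨a, hw none hnone, fun x hx => hw (some x) (mem_eraseNone.1 hx)⟩
    · intro U hU
      simp only [mem_filter, mem_univ, true_and, not_not] at hU ⊢
      obtain ⟨a, haC, ha⟩ := hU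
      refine ⟨⟨some a, fun u hu => ?_⟩, mem_insert_self _ _⟩
      match u with
      | none => exact haC
      | some x =>
        refine ha x ?_
        simp only [mem_insert] at hu
        simpa using hu.resolve_left (by simp)
    · intro S hS
      simp only [mem_filter, mem_univ, true_and, not_not] at hS
      show insert none ((S.eraseNone).map Function.Embedding.some) = S
      rw [Finset.map_some_eraseNone, Finset.insert_erase hS.2]
    · intro U hU
      show eraseNone (insert none (U.map Function.Embedding.some)) = U
      ext x
      simp [Finset.mem_eraseNone]
    · intro S hS
      simp only [mem_filter, mem_univ, true_and, not_not] at hS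
      show (X : Polynomial ℤ) ^ S.card = X * X ^ S.eraseNone.card
      rw [← pow_succ']
      congr 1
      conv_lhs => rw [← Finset.insert_erase hS.2, ← Finset.map_some_eraseNone]
      rw [Finset.card_insert_of_notMem (by simp), Finset.card_map]

lemma sum_P1 [Fintype V] (G : SimpleGraph V) (C : Finset V) (hC : G.IsClique ↑C) :
    ∑ U ∈ univ.filter (fun U : Finset V => (∃ v, ∀ u ∈ U, G.Adj v u) ∨ U ⊆ C), (X : Polynomial ℤ) ^ U.card
      = nbhdPoly G + (if IsMaxClique' G C then (X : Polynomial ℤ) ^ C.card else 0) := by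
  have key : ∀ U : Finset V, U ⊆ C → ¬ (∃ v, ∀ u ∈ U, G.Adj v u) → U = C := by
    intro U hU hnd
    by_contra hne
    obtain ⟨c, hcC, hcU⟩ := exists_of_ssubset (lt_of_le_of_ne hU hne)
    exact hnd ⟨c, fun u hu => (hC (hU hu) hcC (fun h => hcU (h ▸ hu))).symm⟩
  have key2 : IsMaxClique' G C ↔ ¬ (∃ v, ∀ u ∈ C, G.Adj v u) := by
    constructor
    · rintro ⟨-, hmax⟩ ⟨v, hv⟩
      have hvC : v ∉ C := fun h => G.irrefl (hv v h)
      have hcl : G.IsClique ↑(insert v C) := by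
        rw [coe_insert]
        exact hC.insert (fun b hb _ => hv b hb)
      have := hmax (insert v C) hcl (subset_insert _ _)
      exact hvC (this ▸ mem_insert_self v C)
    · intro hnd
      refine ⟨hC, fun D hD hsub => ?_⟩
      by_contra hne
      obtain ⟨v, hvD, hvC⟩ := exists_of_ssubset (lt_of_le_of_ne hsub hne)
      exact hnd ⟨v, fun u hu => (hD (hsub hu) hvD (fun h => hvC (h ▸ hu))).symm⟩
  by_cases hmax : IsMaxClique' G C
  · have hset : univ.filter (fun U : Finset V => (∃ v, ∀ u ∈ U, G.Adj v u) ∨ U ⊆ C)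
        = univ.filter (fun U : Finset V => ∃ v, ∀ u ∈ U, G.Adj v u) ∪ {C} := by
      ext U
      simp only [mem_filter, mem_univ, true_and, mem_union, mem_singleton]
      constructor
      · rintro (h | h)
        · exact Or.inl h
        · by_cases hd : ∃ v, ∀ u ∈ U, G.Adj v u
          · exact Or.inl hd
          · exact Or.inr (key U h hd)
      · rintro (h | rfl)
        · exact Or.inl h
        · exact Or.inr subset_rfl
    rw [hset, Finset.sum_union (by
      simp only [disjoint_singleton_right, mem_filter, mem_univ, true_and]
      exact key2.1 hmax), Finset.sum_singleton, if_pos hmax, nbhdPoly]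
  · have hset : univ.filter (fun U : Finset V => (∃ v, ∀ u ∈ U, G.Adj v u) ∨ U ⊆ C)
        = univ.filter (fun U : Finset V => ∃ v, ∀ u ∈ U, G.Adj v u) := by
      ext U
      simp only [mem_filter, mem_univ, true_and]
      constructor
      · rintro (h | h)
        · exact h
        · by_contra hd
          exact hmax (key2.2 ((key U h hd) ▸ hd))
      · exact Or.inl
    rw [hset, if_neg hmax, add_zero, nbhdPoly]

lemma anchorSet_subset (G : SimpleGraph V) (M C : Finset V) : anchorSet G M C ⊆ C := by
  intro x hx
  simp only [anchorSet, mem_filter] at hx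
  exact hx.1

lemma dom_char [Fintype V] (G : SimpleGraph V) (C : Finset V) (hC : G.IsClique ↑C)
    (U : Finset V) :
    (∃ a ∈ C, ∀ u ∈ U, G.Adj a u) ↔
      (U \ C ⊆ periphery G C ∧ ¬ anchorSet G (U \ C) C ⊆ U ∩ C) := by
  constructor
  · rintro ⟨a, haC, ha⟩
    refine ⟨fun x hx => ?_, fun hsub => ?_⟩
    · rw [mem_sdiff] at hx
      simp only [periphery, mem_filter, mem_univ, true_and]
      exact ⟨hx.2, a, haC, ha x hx.1⟩
    · have haA : a ∈ anchorSet G (U \ C) C := by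
        simp only [anchorSet, mem_filter]
        exact ⟨haC, fun w hw => (ha w (mem_sdiff.1 hw).1).symm⟩
      exact G.irrefl (ha a (mem_inter.1 (hsub haA)).1)
  · rintro ⟨-, hsub⟩
    obtain ⟨a, haA, haU⟩ := not_subset.1 hsub
    simp only [anchorSet, mem_filter] at haA
    refine ⟨a, haA.1, fun u hu => ?_⟩
    by_cases huC : u ∈ C
    · refine (hC huC haA.1 (fun h => haU ?_)).symm
      rw [← h]
      exact mem_inter.2 ⟨hu, huC⟩
    · exact (haA.2 u (mem_sdiff.2 ⟨hu, huC⟩)).symm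

lemma sum_P2 [Fintype V] (G : SimpleGraph V) (C : Finset V) (hC : G.IsClique ↑C) :
    ∑ U ∈ univ.filter (fun U : Finset V => ∃ a ∈ C, ∀ u ∈ U, G.Adj a u), (X : Polynomial ℤ) ^ U.card
      = ∑ A ∈ anchorFamily G C,
          periphPoly G A C * ((1 + X) ^ C.card - X ^ A.card * (1 + X) ^ (C.card - A.card)) := by
  have hperiph_disj : ∀ M : Finset V, M ⊆ periphery G C → Disjoint M C := by
    intro M hM
    rw [disjoint_left]
    intro x hxM hxC
    have := hM hxM
    simp only [periphery, mem_filter] at this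
    exact this.2.1 hxC
  -- step 1: bijection onto pairs (M, S)
  have step1 :
      ∑ U ∈ univ.filter (fun U : Finset V => ∃ a ∈ C, ∀ u ∈ U, G.Adj a u), (X : Polynomial ℤ) ^ U.card
        = ∑ M ∈ (periphery G C).powerset,
            ∑ S ∈ C.powerset.filter (fun S => ¬ anchorSet G M C ⊆ S),
              (X : Polynomial ℤ) ^ (M.card + S.card) := by
    rw [Finset.sum_sigma']
    refine Finset.sum_nbij' (fun U => ⟨U \ C, U ∩ C⟩) (fun p => p.1 ∪ p.2) ?_ ?_ ?_ ?_ ?_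
    · intro U hU
      simp only [mem_filter, mem_univ, true_and] at hU
      obtain ⟨h1, h2⟩ := (dom_char G C hC U).1 hU
      simp only [mem_sigma, mem_powerset, mem_filter]
      exact ⟨h1, inter_subset_right, h2⟩
    · intro p hp
      simp only [mem_sigma, mem_powerset, mem_filter] at hp
      obtain ⟨hM, hS, hns⟩ := hp
      have hdisj := hperiph_disj p.1 hM
      have e1 : (p.1 ∪ p.2) \ C = p.1 := by
        rw [union_sdiff_distrib, sdiff_eq_self_of_disjoint hdisj,
          sdiff_eq_empty_iff_subset.2 hS, union_empty]
      have e2 : (p.1 ∪ p.2) ∩ C = p.2 := by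
        rw [union_inter_distrib_right, (disjoint_iff_inter_eq_empty).1 hdisj,
          inter_eq_left.2 hS, empty_union]
      simp only [mem_filter, mem_univ, true_and]
      exact (dom_char G C hC _).2 ⟨by rw [e1]; exact hM, by rw [e1, e2]; exact hns⟩
    · intro U hU
      exact sdiff_union_inter U C
    · intro p hp
      simp only [mem_sigma, mem_powerset, mem_filter] at hp
      obtain ⟨hM, hS, -⟩ := hp
      have hdisj := hperiph_disj p.1 hM
      have e1 : (p.1 ∪ p.2) \ C = p.1 := by
        rw [union_sdiff_distrib, sdiff_eq_self_of_disjoint hdisj,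
          sdiff_eq_empty_iff_subset.2 hS, union_empty]
      have e2 : (p.1 ∪ p.2) ∩ C = p.2 := by
        rw [union_inter_distrib_right, (disjoint_iff_inter_eq_empty).1 hdisj,
          inter_eq_left.2 hS, empty_union]
      show (⟨(p.1 ∪ p.2) \ C, (p.1 ∪ p.2) ∩ C⟩ : (_ : Finset V) × Finset V) = p
      rw [e1, e2]
    · intro U hU
      show (X : Polynomial ℤ) ^ U.card = X ^ (#(U \ C) + #(U ∩ C))
      rw [card_sdiff_add_card_inter]
  rw [step1]
  -- step 2: evaluate inner sums
  have step2 : ∀ M ∈ (periphery G C).powerset,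
      ∑ S ∈ C.powerset.filter (fun S => ¬ anchorSet G M C ⊆ S),
          (X : Polynomial ℤ) ^ (M.card + S.card)
        = X ^ M.card * ((1 + X) ^ C.card
            - X ^ (anchorSet G M C).card * (1 + X) ^ (C.card - (anchorSet G M C).card)) := by
    intro M _
    rw [← sum_pow_not_supersets (anchorSet_subset G M C), Finset.mul_sum]
    exact Finset.sum_congr rfl fun S _ => pow_add _ _ _
  rw [Finset.sum_congr rfl step2]
  -- step 3: regroup by anchor set
  set f : Finset V → Polynomial ℤ :=
    fun A => (1 + X) ^ C.card - X ^ A.card * (1 + X) ^ (C.card - A.card) with hf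
  have hf0 : f ∅ = 0 := by simp [hf]
  rw [← Finset.sum_filter_add_sum_filter_not ((periphery G C).powerset)
    (fun M => (anchorSet G M C).Nonempty)]
  have hzero : ∑ M ∈ ((periphery G C).powerset).filter
      (fun M => ¬ (anchorSet G M C).Nonempty), (X : Polynomial ℤ) ^ M.card * f (anchorSet G M C)
      = 0 := by
    refine Finset.sum_eq_zero fun M hM => ?_
    simp only [mem_filter, not_nonempty_iff_eq_empty] at hM
    rw [hM.2, hf0, mul_zero]
  rw [hzero, add_zero]
  have hmaps : ∀ M ∈ ((periphery G C).powerset).filter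
      (fun M => (anchorSet G M C).Nonempty), anchorSet G M C ∈ anchorFamily G C := by
    intro M hM
    simp only [mem_filter, mem_powerset] at hM
    simp only [anchorFamily, mem_filter, mem_univ, true_and]
    exact ⟨hM.2, M, hM.1, rfl⟩
  rw [← Finset.sum_fiberwise_of_maps_to hmaps
    (fun M => (X : Polynomial ℤ) ^ M.card * f (anchorSet G M C))]
  refine Finset.sum_congr rfl fun A hA => ?_
  simp only [anchorFamily, mem_filter, mem_univ, true_and] at hA
  have hfib : (((periphery G C).powerset).filter
      (fun M => (anchorSet G M C).Nonempty)).filter (fun M => anchorSet G M C = A)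
      = ((periphery G C).powerset).filter (fun M => anchorSet G M C = A) := by
    rw [filter_filter]
    refine filter_congr fun M _ => ?_
    constructor
    · exact And.right
    · intro h
      exact ⟨h ▸ hA.1, h⟩
  rw [hfib]
  rw [periphPoly, Finset.sum_mul]
  refine Finset.sum_congr rfl fun M hM => ?_
  simp only [mem_filter] at hM
  rw [hM.2]

/-- the neighborhood polynomial after attaching a vertex to a clique `C`. -/
theorem nbhdPoly_attach_clique [Fintype V] (G : SimpleGraph V) (C : Finset V)
    (hC : G.IsClique ↑C) :
    nbhdPoly (attachVertex G C) =
      nbhdPoly G + (if IsMaxClique' G C then (X : Polynomial ℤ) ^ C.card else 0) +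
        X * ∑ A ∈ anchorFamily G C,
          periphPoly G A C * ((1 + X) ^ C.card - X ^ A.card * (1 + X) ^ (C.card - A.card)) := by
  rw [attach_split, sum_P1 G C hC, sum_P2 G C hC]
end

section
/- For every m ≥ 1 there exists a split graph on n = 2m vertices whose anchor width is exactly 2^m − 1 = 2^{n/2} − 1. Concretely, the graph S_m with clique C = {c_1,…,c_m} and independent set {v_1,…,v_m}, where v_i is adjacent to c_j if and only if j ≠ i, has |A_{S_m}(C)| = 2^m − 1. -/
open Polynomial Finset
open scoped Classical

variable {V : Type*}

/-- The split graph `S_m`: a clique `c_1,…,c_m` (the `inl` vertices) and an independent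
set `v_1,…,v_m` (the `inr` vertices), with `v_i` adjacent to `c_j` iff `i ≠ j`. -/
def splitGraph (m : ℕ) : SimpleGraph (Fin m ⊕ Fin m) where
  Adj x y := match x, y with
    | .inl i, .inl j => i ≠ j
    | .inl i, .inr j => i ≠ j
    | .inr i, .inl j => i ≠ j
    | .inr _, .inr _ => False
  symm := ⟨by rintro (i|i) (j|j) h <;> simp_all <;> omega⟩
  loopless := ⟨by rintro (i|i) h <;> simp_all⟩

lemma adj_rl {m : ℕ} {i j : Fin m} : (splitGraph m).Adj (Sum.inr i) (Sum.inl j) ↔ i ≠ j := Iff.rfl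

lemma mem_periphery {V : Type*} [Fintype V] {G : SimpleGraph V} {C : Finset V} {x : V} :
    x ∈ periphery G C ↔ x ∉ C ∧ ∃ c ∈ C, G.Adj c x := by
  classical
  simp [periphery]

lemma mem_anchorSet {V : Type*} {G : SimpleGraph V} {M C : Finset V} {x : V} :
    x ∈ anchorSet G M C ↔ x ∈ C ∧ ∀ w ∈ M, G.Adj w x := by
  classical
  simp [anchorSet]

lemma family_eq (m : ℕ) :
    anchorFamily (splitGraph m) ((univ : Finset (Fin m)).image Sum.inl)
      = ((univ : Finset (Finset (Fin m))).erase ∅).image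
          (fun T => T.image Sum.inl) := by
  classical
  ext A
  simp only [anchorFamily, mem_filter, mem_univ, true_and, mem_image]
  constructor
  · rintro ⟨hne, M, hM, rfl⟩
    refine ⟨univ.filter (fun j => Sum.inl j ∈ anchorSet (splitGraph m) M (univ.image Sum.inl)),
      ?_, ?_⟩
    · obtain ⟨a, ha⟩ := hne
      have haC : a ∈ (univ : Finset (Fin m)).image Sum.inl := (mem_anchorSet.mp ha).1
      obtain ⟨j, -, rfl⟩ := mem_image.mp haC
      have hne' : (univ.filter (fun j => Sum.inl j ∈
          anchorSet (splitGraph m) M (univ.image Sum.inl))).Nonempty :=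
        ⟨j, mem_filter.mpr ⟨mem_univ _, ha⟩⟩
      exact mem_erase.mpr ⟨hne'.ne_empty, mem_univ _⟩
    · ext x
      rcases x with j | j
      · simp only [mem_image, mem_filter, mem_univ, true_and]
        constructor
        · rintro ⟨k, hk, hkj⟩
          have : k = j := Sum.inl_injective hkj
          exact this ▸ hk
        · intro h; exact ⟨j, h, rfl⟩
      · simp only [mem_image]
        constructor
        · rintro ⟨k, hk, hkj⟩; exact absurd hkj Sum.inl_ne_inr
        · intro h
          have : Sum.inr j ∈ (univ : Finset (Fin m)).image Sum.inl :=
            (mem_anchorSet.mp h).1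
          simp at this
  · rintro ⟨T, hT, rfl⟩
    simp only [mem_erase, mem_univ, and_true] at hT
    replace hT : T.Nonempty := Finset.nonempty_iff_ne_empty.mpr hT
    refine ⟨hT.image _, ((univ : Finset (Fin m)) \ T).image Sum.inr, ?_, ?_⟩
    · intro w hw
      obtain ⟨i, hi, rfl⟩ := mem_image.mp hw
      simp only [mem_sdiff, mem_univ, true_and] at hi
      obtain ⟨j, hj⟩ := hT
      refine mem_periphery.mpr ⟨?_, Sum.inl j, mem_image.mpr ⟨j, mem_univ _, rfl⟩, ?_⟩
      · simp
      · exact fun h => hi (h ▸ hj)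
    · ext x
      rcases x with j | j
      · simp only [mem_anchorSet, mem_image, mem_univ, true_and]
        constructor
        · rintro ⟨k, hk, hkj⟩
          refine ⟨⟨j, rfl⟩, ?_⟩
          rintro w hw
          obtain ⟨i, hi, rfl⟩ := hw
          simp only [mem_sdiff, mem_univ, true_and] at hi
          refine adj_rl.mpr fun hij => hi ?_
          rw [hij]; exact Sum.inl_injective hkj ▸ hk
        · rintro ⟨-, hall⟩
          refine ⟨j, ?_, rfl⟩
          by_contra hj
          have := hall (Sum.inr j) ⟨j, mem_sdiff.mpr ⟨mem_univ _, hj⟩, rfl⟩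
          exact adj_rl.mp this rfl
      · simp only [mem_anchorSet, mem_image]
        constructor
        · rintro ⟨k, hk, hkj⟩; exact absurd hkj Sum.inl_ne_inr
        · rintro ⟨⟨k, hk, hkj⟩, -⟩; exact absurd hkj Sum.inl_ne_inr

lemma family_card (m : ℕ) :
    (anchorFamily (splitGraph m) ((univ : Finset (Fin m)).image Sum.inl)).card = 2 ^ m - 1 := by
  classical
  rw [family_eq m, card_image_of_injective _ (Finset.image_injective Sum.inl_injective)]
  rw [card_erase_of_mem (mem_univ _)]
  simp


lemma mem_anchorFamily {V : Type*} [Fintype V] {G : SimpleGraph V} {C A : Finset V} :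
    A ∈ anchorFamily G C ↔ A.Nonempty ∧ ∃ M ⊆ periphery G C, A = anchorSet G M C := by
  classical
  simp [anchorFamily]

lemma adj_ll {m : ℕ} {i j : Fin m} : (splitGraph m).Adj (Sum.inl i) (Sum.inl j) ↔ i ≠ j := Iff.rfl
lemma adj_lr {m : ℕ} {i j : Fin m} : (splitGraph m).Adj (Sum.inl i) (Sum.inr j) ↔ i ≠ j := Iff.rfl
lemma adj_rr {m : ℕ} {i j : Fin m} : ¬ (splitGraph m).Adj (Sum.inr i) (Sum.inr j) := fun h => h

lemma clique_card_le {m : ℕ} (C : Finset (Fin m ⊕ Fin m))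
    (hC : (splitGraph m).IsClique (C : Set (Fin m ⊕ Fin m))) : C.card ≤ m := by
  classical
  have hinj : Set.InjOn (Sum.elim id id) (C : Set (Fin m ⊕ Fin m)) := by
    intro x hx y hy hxy
    by_contra hne
    have hadj := hC hx hy hne
    rcases x with i | i <;> rcases y with j | j <;> simp at hxy
    · exact (adj_ll.mp hadj) hxy
    · exact (adj_lr.mp hadj) hxy
    · exact (adj_rl.mp hadj) hxy
    · exact adj_rr hadj
  calc C.card = (C.image (Sum.elim id id)).card := (Finset.card_image_of_injOn hinj).symm
    _ ≤ (univ : Finset (Fin m)).card := card_le_card (subset_univ _)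
    _ = m := by simp

lemma anchorFamily_card_le {m : ℕ} (C : Finset (Fin m ⊕ Fin m))
    (hC : (splitGraph m).IsClique (C : Set (Fin m ⊕ Fin m))) :
    (anchorFamily (splitGraph m) C).card ≤ 2 ^ m - 1 := by
  classical
  have h1 : anchorFamily (splitGraph m) C ⊆ C.powerset.erase ∅ := by
    intro A hA
    obtain ⟨hne, M, hM, rfl⟩ := mem_anchorFamily.mp hA
    refine mem_erase.mpr ⟨hne.ne_empty, mem_powerset.mpr ?_⟩
    intro x hx
    exact (mem_anchorSet.mp hx).1
  calc (anchorFamily (splitGraph m) C).card ≤ (C.powerset.erase ∅).card := card_le_card h1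
    _ = 2 ^ C.card - 1 := by
        rw [card_erase_of_mem (mem_powerset.mpr (empty_subset _)), card_powerset]
    _ ≤ 2 ^ m - 1 :=
        Nat.sub_le_sub_right (Nat.pow_le_pow_right (by norm_num) (clique_card_le C hC)) 1

/-- the split graph S_m on n = 2m vertices has anchor width exactly
2^m − 1 = 2^(n/2) − 1, attained at the clique C = {c_1,…,c_m}. -/
theorem splitGraph_anchorWidth (m : ℕ) (hm : 1 ≤ m) :
    Fintype.card (Fin m ⊕ Fin m) = 2 * m ∧
    (splitGraph m).IsClique (((univ : Finset (Fin m)).image Sum.inl : Finset (Fin m ⊕ Fin m)) : Set (Fin m ⊕ Fin m)) ∧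
    (∀ i j : Fin m, ¬ (splitGraph m).Adj (Sum.inr i) (Sum.inr j)) ∧
    (anchorFamily (splitGraph m) (((univ : Finset (Fin m)).image Sum.inl : Finset (Fin m ⊕ Fin m)))).card = 2 ^ m - 1 ∧
    ∀ C : Finset (Fin m ⊕ Fin m), (splitGraph m).IsClique ↑C →
      (anchorFamily (splitGraph m) C).card ≤ 2 ^ m - 1 := by
  refine ⟨by simp [two_mul], ?_, fun i j => adj_rr, family_card m, fun C hC => anchorFamily_card_le C hC⟩
  intro x hx y hy hne
  simp only [coe_image, Set.mem_image, mem_coe, mem_univ] at hx hy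
  obtain ⟨i, -, rfl⟩ := hx
  obtain ⟨j, -, rfl⟩ := hy
  exact adj_ll.mpr fun h => hne (h ▸ rfl)
end

section
/- Let a chordal graph G be represented as the intersection graph of a family of subtrees of a host tree T, where T has ℓ leaves and at most n vertices. Then for every maximal clique C of G, the number of anchor sets of C is at most n^ℓ; consequently, a chordal graph with leafage ℓ admitting such a representation with host tree on at most n vertices has anchor width at most n^ℓ. -/
open Polynomial Finset
open scoped Classical

variable {V : Type*}

/-- The number of leaves of a graph (vertices of degree exactly one). -/
noncomputable def leafCount {α : Type*} [Fintype α] (T : SimpleGraph α) : ℕ :=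
  (univ.filter fun a => (univ.filter fun b => T.Adj a b).card = 1).card

/-- A subtree representation of `G`: the host graph `T` is a tree, each vertex is assigned
a nonempty subtree (a connected induced subgraph) and adjacency corresponds to
intersection of the subtrees. -/
def IsSubtreeRep {α : Type*} [Fintype α] (G : SimpleGraph V) (T : SimpleGraph α)
    (t : V → Finset α) : Prop :=
  T.IsTree ∧
  (∀ v : V, (t v).Nonempty ∧ (T.induce ((t v : Finset α) : Set α)).Connected) ∧
  (∀ u v : V, u ≠ v → (G.Adj u v ↔ ((t u) ∩ (t v)).Nonempty))

section TreeLemmas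

variable {α : Type*} {T : SimpleGraph α}


/-- The unique path between two vertices in a tree. -/
noncomputable def pth (hT : T.IsTree) (u v : α) : T.Walk u v :=
  (hT.existsUnique_path u v).choose

lemma pth_isPath (hT : T.IsTree) (u v : α) : (pth hT u v).IsPath :=
  (hT.existsUnique_path u v).choose_spec.1

lemma pth_eq (hT : T.IsTree) {u v : α} (p : T.Walk u v) (hp : p.IsPath) : p = pth hT u v :=
  (hT.existsUnique_path u v).choose_spec.2 p hp

lemma pth_nil (hT : T.IsTree) (x : α) : pth hT x x = SimpleGraph.Walk.nil :=
  (pth_eq hT _ (SimpleGraph.Walk.IsPath.nil)).symm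

lemma pth_adj (hT : T.IsTree) {x y : α} (h : T.Adj x y) :
    pth hT x y = SimpleGraph.Walk.cons h SimpleGraph.Walk.nil :=
  (pth_eq hT _ (by simp [SimpleGraph.Walk.cons_isPath_iff, h.ne])).symm

lemma pth_reverse (hT : T.IsTree) (x y : α) : (pth hT x y).reverse = pth hT y x :=
  pth_eq hT _ ((pth_isPath hT x y).reverse)

lemma mem_pth_symm (hT : T.IsTree) {x y a : α} (h : a ∈ (pth hT x y).support) :
    a ∈ (pth hT y x).support := by
  rw [← pth_reverse hT, SimpleGraph.Walk.support_reverse, List.mem_reverse]; exact h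

lemma pth_takeUntil (hT : T.IsTree) {x y a : α} (h : a ∈ (pth hT x y).support) :
    (pth hT x y).takeUntil a h = pth hT x a :=
  pth_eq hT _ ((pth_isPath hT x y).takeUntil h)

lemma pth_dropUntil (hT : T.IsTree) {x y a : α} (h : a ∈ (pth hT x y).support) :
    (pth hT x y).dropUntil a h = pth hT a y :=
  pth_eq hT _ ((pth_isPath hT x y).dropUntil h)

lemma support_pth_prefix (hT : T.IsTree) {x y a : α} (h : a ∈ (pth hT x y).support) :
    (pth hT x a).support ⊆ (pth hT x y).support := by
  rw [← pth_takeUntil hT h]; exact SimpleGraph.Walk.support_takeUntil_subset _ h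

lemma support_pth_suffix (hT : T.IsTree) {x y a : α} (h : a ∈ (pth hT x y).support) :
    (pth hT a y).support ⊆ (pth hT x y).support := by
  rw [← pth_dropUntil hT h]; exact SimpleGraph.Walk.support_dropUntil_subset _ h

lemma pth_length_add (hT : T.IsTree) {x y a : α} (h : a ∈ (pth hT x y).support) :
    (pth hT x y).length = (pth hT x a).length + (pth hT a y).length := by
  conv_lhs => rw [← SimpleGraph.Walk.take_spec (pth hT x y) h]
  rw [SimpleGraph.Walk.length_append, pth_takeUntil hT h, pth_dropUntil hT h]

lemma pth_split (hT : T.IsTree) {x y a b : α} (ha : a ∈ (pth hT x y).support)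
    (hb : b ∈ (pth hT x y).support) :
    b ∈ (pth hT x a).support ∨ b ∈ (pth hT a y).support := by
  rw [← pth_takeUntil hT ha, ← pth_dropUntil hT ha]
  rw [← SimpleGraph.Walk.take_spec (pth hT x y) ha, SimpleGraph.Walk.mem_support_append_iff] at hb
  exact hb

lemma pth_seg (hT : T.IsTree) {x y a b : α} (ha : a ∈ (pth hT x y).support)
    (hb : b ∈ (pth hT x y).support) :
    (pth hT a b).support ⊆ (pth hT x y).support := by
  rcases pth_split hT ha hb with hb' | hb'
  · intro m hm
    have hm' : m ∈ (pth hT b a).support := mem_pth_symm hT hm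
    exact support_pth_prefix hT ha (support_pth_suffix hT hb' hm')
  · intro m hm
    exact support_pth_suffix hT ha (support_pth_prefix hT hb' hm)

lemma pth_union (hT : T.IsTree) {x y : α} (z : α) {m : α} (hm : m ∈ (pth hT x y).support) :
    m ∈ (pth hT x z).support ∨ m ∈ (pth hT z y).support := by
  set w := (pth hT x z).append (pth hT z y) with hw
  have hbp : w.bypass = pth hT x y := pth_eq hT _ w.bypass_isPath
  rw [← hbp] at hm
  have := SimpleGraph.Walk.support_bypass_subset w hm
  rw [hw, SimpleGraph.Walk.mem_support_append_iff] at this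
  exact this
/-- helper: the unique path between two distinct points both equal to an edge forces equality. -/
lemma pth_eq_edge_aux (hT : T.IsTree) {x u x' : α} (h2 : T.Adj x u) (h : T.Adj x x')
    (p : T.Walk x' u) (hp : p.IsPath) (hx : x ∉ p.support) : x' = u := by
  have h1 : SimpleGraph.Walk.cons h p = pth hT x u :=
    pth_eq hT _ (by rw [SimpleGraph.Walk.cons_isPath_iff]; exact ⟨hp, hx⟩)
  have h2' : SimpleGraph.Walk.cons h2 SimpleGraph.Walk.nil = pth hT x u :=
    (pth_adj hT h2).symm
  have hs : (SimpleGraph.Walk.cons h p).support = [x, u] := by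
    rw [h1, ← h2']; simp
  rw [SimpleGraph.Walk.support_cons, SimpleGraph.Walk.support_eq_cons p] at hs
  simp only [List.cons.injEq] at hs
  exact hs.2.1

lemma median (hT : T.IsTree) : ∀ (n : ℕ) (x y z : α), (pth hT x y).length ≤ n →
    ∃ m, m ∈ (pth hT x y).support ∧ m ∈ (pth hT x z).support ∧ m ∈ (pth hT y z).support := by
  intro n
  induction n with
  | zero =>
    intro x y z hlen
    have hxy : x = y := SimpleGraph.Walk.eq_of_length_eq_zero (Nat.le_zero.mp hlen)
    subst hxy
    exact ⟨x, SimpleGraph.Walk.start_mem_support _, SimpleGraph.Walk.start_mem_support _,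
      SimpleGraph.Walk.start_mem_support _⟩
  | succ n ih =>
    intro x y z hlen
    by_cases hxyz : x ∈ (pth hT y z).support
    · exact ⟨x, SimpleGraph.Walk.start_mem_support _, SimpleGraph.Walk.start_mem_support _, hxyz⟩
    have hxy : x ≠ y := by
      rintro rfl; exact hxyz (SimpleGraph.Walk.start_mem_support _)
    have hxz : x ≠ z := by
      rintro rfl; exact hxyz (SimpleGraph.Walk.end_mem_support _)
    obtain ⟨x', h, q, hq⟩ := SimpleGraph.Walk.exists_eq_cons_of_ne hxy (pth hT x y)
    have hqpath : q.IsPath := by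
      have := pth_isPath hT x y; rw [hq, SimpleGraph.Walk.cons_isPath_iff] at this; exact this.1
    have hxq : x ∉ q.support := by
      have := pth_isPath hT x y; rw [hq, SimpleGraph.Walk.cons_isPath_iff] at this; exact this.2
    have hqeq : q = pth hT x' y := pth_eq hT q hqpath
    -- key claim : x' ∈ (pth hT x z).support
    obtain ⟨u, h2, r', hr⟩ := SimpleGraph.Walk.exists_eq_cons_of_ne hxz (pth hT x z)
    have hrpath : r'.IsPath := by
      have := pth_isPath hT x z; rw [hr, SimpleGraph.Walk.cons_isPath_iff] at this; exact this.1
    have hxr : x ∉ r'.support := by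
      have := pth_isPath hT x z; rw [hr, SimpleGraph.Walk.cons_isPath_iff] at this; exact this.2
    have hreq : r' = pth hT u z := pth_eq hT r' hrpath
    have hx' : x' ∈ (pth hT x z).support := by
      by_cases hux : u = x'
      · subst hux; rw [hr, SimpleGraph.Walk.support_cons]
        exact List.mem_cons_of_mem _ (SimpleGraph.Walk.start_mem_support _)
      -- u ≠ x' : contradiction
      exfalso
      have hu_mem : u ∈ (pth hT x z).support := by
        rw [hr, SimpleGraph.Walk.support_cons]
        exact List.mem_cons_of_mem _ (SimpleGraph.Walk.start_mem_support _)
      rcases pth_union hT y hu_mem with hu1 | hu2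
      · -- u on pth x y
        have hux2 : u ≠ x := h2.ne'
        have hu_q : u ∈ q.support := by
          rw [hq, SimpleGraph.Walk.support_cons, List.mem_cons] at hu1
          rcases hu1 with h3 | h3
          · exact absurd h3 hux2
          · exact h3
        rw [hqeq] at hu_q hxq
        have hsub : (pth hT x' u).support ⊆ (pth hT x' y).support := support_pth_prefix hT hu_q
        exact hux ((pth_eq_edge_aux hT h2 h (pth hT x' u) (pth_isPath hT x' u)
          (fun hx'' => hxq (hsub hx''))).symm ▸ rfl) |>.elim
      · -- u on pth y z ; locate x'
        have hx'_mem : x' ∈ (pth hT x y).support := by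
          rw [hq, SimpleGraph.Walk.support_cons]
          exact List.mem_cons_of_mem _ (SimpleGraph.Walk.start_mem_support _)
        rcases pth_union hT z hx'_mem with hx1 | hx2
        · -- x' on pth x z : symmetric contradiction
          have hx'x : x' ≠ x := h.ne'
          have hx'_r : x' ∈ r'.support := by
            rw [hr, SimpleGraph.Walk.support_cons, List.mem_cons] at hx1
            rcases hx1 with h3 | h3
            · exact absurd h3 hx'x
            · exact h3
          rw [hreq] at hx'_r hxr
          have hsub : (pth hT u x').support ⊆ (pth hT u z).support := support_pth_prefix hT hx'_r
          exact hux (pth_eq_edge_aux hT h h2 (pth hT u x') (pth_isPath hT u x')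
            (fun hx'' => hxr (hsub hx'')))
        · -- x' on pth z y, u on pth y z : both on pth y z, use seg
          have hx2' : x' ∈ (pth hT y z).support := mem_pth_symm hT hx2
          have hseg : (pth hT x' u).support ⊆ (pth hT y z).support := pth_seg hT hx2' hu2
          exact hux ((pth_eq_edge_aux hT h2 h (pth hT x' u) (pth_isPath hT x' u)
            (fun hx'' => hxyz (hseg hx''))).symm ▸ rfl) |>.elim
    -- now apply IH at x'
    have hlen' : (pth hT x' y).length ≤ n := by
      have : (pth hT x y).length = q.length + 1 := by rw [hq]; simp
      rw [hqeq] at this; omega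
    obtain ⟨m, hm1, hm2, hm3⟩ := ih x' y z hlen'
    refine ⟨m, ?_, ?_, hm3⟩
    · rw [hq, SimpleGraph.Walk.support_cons]; exact List.mem_cons_of_mem _ (hqeq ▸ hm1)
    · exact support_pth_suffix hT hx' hm2

lemma median' (hT : T.IsTree) (x y z : α) :
    ∃ m, m ∈ (pth hT x y).support ∧ m ∈ (pth hT x z).support ∧ m ∈ (pth hT y z).support :=
  median hT (pth hT x y).length x y z le_rfl

/-- A finset is "path-closed". -/
def PClosed (hT : T.IsTree) (S : Finset α) : Prop :=
  ∀ a ∈ S, ∀ b ∈ S, ∀ m ∈ (pth hT a b).support, m ∈ S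

lemma pclosed_of_connected (hT : T.IsTree) (S : Finset α)
    (hc : (T.induce ((S : Finset α) : Set α)).Connected) : PClosed hT S := by
  intro a ha b hb m hm
  have hr : (T.induce ((S : Finset α) : Set α)).Reachable ⟨a, by simpa using ha⟩
      ⟨b, by simpa using hb⟩ := hc ⟨a, by simpa using ha⟩ ⟨b, by simpa using hb⟩
  obtain ⟨W⟩ := hr
  have hW : ∀ x ∈ (W.map (SimpleGraph.Embedding.induce _).toHom).support, x ∈ S := by
    intro x hx
    rw [SimpleGraph.Walk.support_map, List.mem_map] at hx
    obtain ⟨⟨y, hy⟩, _, rfl⟩ := hx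
    simpa using hy
  set W' := W.map (SimpleGraph.Embedding.induce _).toHom with hW'
  have hbp : W'.bypass = pth hT a b := pth_eq hT _ W'.bypass_isPath
  rw [← hbp] at hm
  exact hW _ (SimpleGraph.Walk.support_bypass_subset W' hm)

lemma exists_gate (hT : T.IsTree) (S : Finset α) (hcl : PClosed hT S) (hne : S.Nonempty)
    (v : α) : ∃ g ∈ S, ∀ s ∈ S, g ∈ (pth hT v s).support := by
  obtain ⟨g, hgS, hgmin⟩ := S.exists_min_image (fun s => (pth hT v s).length) hne
  refine ⟨g, hgS, fun s hs => ?_⟩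
  obtain ⟨m, hm1, hm2, hm3⟩ := median' hT v g s
  have hmS : m ∈ S := hcl g hgS s hs m hm3
  have hadd : (pth hT v g).length = (pth hT v m).length + (pth hT m g).length :=
    pth_length_add hT hm1
  have hmin := hgmin m hmS
  have : (pth hT m g).length = 0 := by omega
  have : m = g := SimpleGraph.Walk.eq_of_length_eq_zero this
  exact this ▸ hm2

lemma helly {V : Type*} (hT : T.IsTree) (t : V → Finset α) (C : Finset V)
    (hcl : ∀ v, PClosed hT (t v)) (hne : ∀ v, (t v).Nonempty)
    (hpair : ∀ c ∈ C, ∀ c' ∈ C, (t c ∩ t c').Nonempty) (hC : C.Nonempty) :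
    ∃ r, ∀ c ∈ C, r ∈ t c := by
  obtain ⟨v⟩ := hT.isConnected.nonempty
  have hg : ∀ c : V, ∃ g ∈ t c, ∀ s ∈ t c, g ∈ (pth hT v s).support :=
    fun c => exists_gate hT (t c) (hcl c) (hne c) v
  choose g hgmem hgprop using hg
  obtain ⟨c₀, hc₀, hmax⟩ := C.exists_max_image (fun c => (pth hT v (g c)).length) hC
  refine ⟨g c₀, fun c hc => ?_⟩
  obtain ⟨w, hw⟩ := hpair c hc c₀ hc₀
  rw [Finset.mem_inter] at hw
  have h1 : g c ∈ (pth hT v w).support := hgprop c w hw.1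
  have h2 : g c₀ ∈ (pth hT v w).support := hgprop c₀ w hw.2
  rcases pth_split hT h1 h2 with hcase | hcase
  · -- g c₀ on pth v (g c)
    have hadd : (pth hT v (g c)).length = (pth hT v (g c₀)).length + (pth hT (g c₀) (g c)).length :=
      pth_length_add hT hcase
    have := hmax c hc
    have hz : (pth hT (g c₀) (g c)).length = 0 := by omega
    have : g c₀ = g c := SimpleGraph.Walk.eq_of_length_eq_zero hz
    exact this ▸ hgmem c
  · -- g c₀ on pth (g c) w ⊆ t c
    exact hcl c (g c) (hgmem c) w hw.1 _ hcase

lemma exists_leaf_through (hT : T.IsTree) [Fintype α] (hcard : 2 ≤ Fintype.card α) (r x : α) :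
    ∃ y : α, (Finset.univ.filter fun b => T.Adj y b).card = 1 ∧ x ∈ (pth hT r y).support := by
  set Sx : Finset α := Finset.univ.filter (fun y => x ∈ (pth hT r y).support) with hSx
  have hxS : x ∈ Sx := by
    simp [hSx, SimpleGraph.Walk.end_mem_support]
  obtain ⟨y, hyS, hymax⟩ := Sx.exists_max_image (fun y => (pth hT r y).length) ⟨x, hxS⟩
  have hy_mem : x ∈ (pth hT r y).support := by simpa [hSx] using hyS
  refine ⟨y, ?_, hy_mem⟩
  -- every neighbor of y lies on pth r y
  have hnb : ∀ z, T.Adj y z → z ∈ (pth hT r y).support := by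
    intro z hz
    by_contra hzn
    have hpath : ((pth hT r y).concat hz).IsPath := by
      rw [← SimpleGraph.Walk.isPath_reverse_iff, SimpleGraph.Walk.reverse_concat,
        SimpleGraph.Walk.cons_isPath_iff]
      refine ⟨(pth_isPath hT r y).reverse, ?_⟩
      rw [SimpleGraph.Walk.support_reverse, List.mem_reverse]
      exact hzn
    have heq : (pth hT r y).concat hz = pth hT r z := pth_eq hT _ hpath
    have hzS : z ∈ Sx := by
      simp only [hSx, Finset.mem_filter, Finset.mem_univ, true_and]
      rw [← heq, SimpleGraph.Walk.support_concat, List.mem_append]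
      exact Or.inl hy_mem
    have := hymax z hzS
    rw [← heq, SimpleGraph.Walk.length_concat] at this
    omega
  -- any neighbor on the path satisfies length identity
  have hlen : ∀ z, T.Adj y z → (pth hT r y).length = (pth hT r z).length + 1 := by
    intro z hz
    have hmem := hnb z hz
    have := pth_length_add hT hmem
    rw [pth_adj hT hz.symm] at this
    simpa using this
  -- uniqueness of neighbor
  have huniq : ∀ z₁ z₂, T.Adj y z₁ → T.Adj y z₂ → z₁ = z₂ := by
    intro z₁ z₂ h1 h2
    have hm1 := hnb z₁ h1
    have hm2 := hnb z₂ h2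
    rcases pth_split hT hm2 hm1 with hcase | hcase
    · -- z₁ on pth r z₂
      have hadd := pth_length_add hT hcase
      have e1 := hlen z₁ h1
      have e2 := hlen z₂ h2
      have hz : (pth hT z₁ z₂).length = 0 := by omega
      exact SimpleGraph.Walk.eq_of_length_eq_zero hz
    · -- z₁ on pth z₂ y = edge
      rw [pth_adj hT h2.symm] at hcase
      simp only [SimpleGraph.Walk.support_cons, SimpleGraph.Walk.support_nil,
        List.mem_cons, List.mem_singleton] at hcase
      rcases hcase with h3 | h3
      · exact h3.symm ▸ rfl
      · rcases h3 with h3 | h3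
        · exact absurd h3 h1.ne'
        · exact absurd h3 List.not_mem_nil
  -- existence of a neighbor
  obtain ⟨v, hv⟩ : ∃ v : α, v ≠ y := by
    have := Fintype.exists_ne_of_one_lt_card (by omega) y
    exact this
  obtain ⟨u, hu, _, _⟩ := SimpleGraph.Walk.exists_eq_cons_of_ne (Ne.symm hv) (pth hT y v)
  have : Finset.univ.filter (fun b => T.Adj y b) = {u} := by
    ext z
    simp only [Finset.mem_filter, Finset.mem_univ, true_and, Finset.mem_singleton]
    constructor
    · intro hz; exact huniq z u hz hu
    · rintro rfl; exact hu
  rw [this]; simp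

end TreeLemmas

/-- if a chordal graph is represented by subtrees of a host tree with `ℓ`
leaves and at most `n` vertices, then every (in particular every maximal) clique has at
most `n ^ ℓ` anchor sets, i.e. the anchor width is at most `n ^ ℓ`. -/
theorem anchorWidth_le_of_subtreeRep [Fintype V] {α : Type*} [Fintype α]
    (G : SimpleGraph V) (T : SimpleGraph α) (t : V → Finset α)
    (hrep : IsSubtreeRep G T t) (ℓ n : ℕ) (hl : leafCount T = ℓ) (hn : Fintype.card α ≤ n) :
    ∀ C : Finset V, G.IsClique ↑C → (anchorFamily G C).card ≤ n ^ ℓ := by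
  intro C hC
  obtain ⟨hT, hsub, hadj⟩ := hrep
  have hne : ∀ v, (t v).Nonempty := fun v => (hsub v).1
  have hcl : ∀ v, PClosed hT (t v) := fun v => pclosed_of_connected hT (t v) (hsub v).2
  have hα : Nonempty α := hT.isConnected.nonempty
  have hcard1 : 1 ≤ Fintype.card α := Fintype.card_pos
  have hn1 : 1 ≤ n := le_trans hcard1 hn
  have hpow1 : 1 ≤ n ^ ℓ := Nat.one_le_pow _ _ hn1
  -- empty clique case
  rcases C.eq_empty_or_nonempty with rfl | hCne
  · have hemp : anchorFamily G (∅ : Finset V) = ∅ := by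
      ext A
      simp only [anchorFamily, Finset.mem_filter, Finset.mem_univ, true_and,
        Finset.notMem_empty, iff_false, not_and]
      rintro hA ⟨M, hM, rfl⟩
      simp [anchorSet] at hA
    rw [hemp]; simpa using Nat.zero_le _
  -- small host tree case
  by_cases hcard : 2 ≤ Fintype.card α
  swap
  · have h1 : Fintype.card α = 1 := by omega
    have hsing : Subsingleton α := Fintype.card_le_one_iff_subsingleton.mp (by omega)
    have hsub1 : anchorFamily G C ⊆ {C} := by
      intro A hA
      rw [anchorFamily, Finset.mem_filter] at hA
      obtain ⟨-, hAne, M, hM, rfl⟩ := hA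
      have hAC : anchorSet G M C = C := by
        ext c
        simp only [anchorSet, Finset.mem_filter, and_iff_left_iff_imp]
        intro hcC w hwM
        have hwP := hM hwM
        rw [periphery, Finset.mem_filter] at hwP
        have hwc : w ≠ c := fun e => hwP.2.1 (e ▸ hcC)
        rw [hadj w c hwc]
        obtain ⟨a, haw⟩ := hne w
        obtain ⟨b, hbc⟩ := hne c
        have hab : a = b := Subsingleton.elim a b
        exact ⟨a, Finset.mem_inter.mpr ⟨haw, hab ▸ hbc⟩⟩
      rw [hAC]; simp
    calc (anchorFamily G C).card ≤ ({C} : Finset (Finset V)).card := Finset.card_le_card hsub1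
      _ = 1 := Finset.card_singleton _
      _ ≤ n ^ ℓ := hpow1
  -- main case
  have hpair : ∀ c ∈ C, ∀ c' ∈ C, (t c ∩ t c').Nonempty := by
    intro c hc c' hc'
    by_cases h : c = c'
    · subst h; simpa [Finset.inter_self] using hne c
    · exact (hadj c c' h).mp (hC (Finset.mem_coe.mpr hc) (Finset.mem_coe.mpr hc') h)
  obtain ⟨r, hr⟩ := helly hT t C hcl hne hpair hCne
  have hg : ∀ w : V, ∃ g ∈ t w, ∀ s ∈ t w, g ∈ (pth hT r s).support :=
    fun w => exists_gate hT (t w) (hcl w) (hne w) r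
  choose p hpmem hpprop using hg
  choose lf hlf1 hlf2 using exists_leaf_through hT hcard r
  have hadj_gate : ∀ w ∈ periphery G C, ∀ c ∈ C, (G.Adj w c ↔ p w ∈ t c) := by
    intro w hw c hc
    rw [periphery, Finset.mem_filter] at hw
    have hwc : w ≠ c := fun e => hw.2.1 (e ▸ hc)
    rw [hadj w c hwc]
    constructor
    · rintro ⟨x, hx⟩
      rw [Finset.mem_inter] at hx
      exact hcl c r (hr c hc) x hx.2 _ (hpprop w x hx.1)
    · intro h
      exact ⟨p w, Finset.mem_inter.mpr ⟨hpmem w, h⟩⟩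
  set Leaf := {a : α // (Finset.univ.filter fun b => T.Adj a b).card = 1} with hLeafdef
  have hQmax : ∀ Q : Finset α, ∀ l : Leaf,
      ∃ m : α, ((Q.filter fun q => lf q = ↑l).Nonempty →
        (m ∈ Q.filter fun q => lf q = ↑l) ∧
          ∀ q ∈ (Q.filter fun q => lf q = ↑l), (pth hT r q).length ≤ (pth hT r m).length) ∧
        (¬ (Q.filter fun q => lf q = ↑l).Nonempty → m = r) := by
    intro Q l
    by_cases h : (Q.filter fun q => lf q = ↑l).Nonempty
    · obtain ⟨m, hm1, hm2⟩ := Finset.exists_max_image _ (fun q => (pth hT r q).length) h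
      exact ⟨m, fun _ => ⟨hm1, hm2⟩, fun h' => absurd h h'⟩
    · exact ⟨r, fun h' => absurd h' h, fun _ => rfl⟩
  choose e he1 he2 using hQmax
  -- key determination lemma
  have key : ∀ M ⊆ periphery G C, anchorSet G M C =
      C.filter (fun c => ∀ l : Leaf, e (M.image p) l ∈ t c) := by
    intro M hM
    ext c
    simp only [anchorSet, Finset.mem_filter]
    refine and_congr_right fun hc => ?_
    constructor
    · intro hall l
      by_cases hne' : ((M.image p).filter fun q => lf q = ↑l).Nonempty
      · obtain ⟨hmem, -⟩ := he1 (M.image p) l hne'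
        have hmQ := (Finset.mem_filter.mp hmem).1
        rw [Finset.mem_image] at hmQ
        obtain ⟨w, hwM, hwe⟩ := hmQ
        rw [← hwe]
        exact (hadj_gate w (hM hwM) c hc).mp (hall w hwM)
      · rw [he2 (M.image p) l hne']
        exact hr c hc
    · intro hall w hwM
      rw [hadj_gate w (hM hwM) c hc]
      set q := p w with hqdef
      have hqQ : q ∈ M.image p := Finset.mem_image_of_mem _ hwM
      set l : Leaf := ⟨lf q, hlf1 q⟩ with hldef
      have hqf : q ∈ (M.image p).filter (fun q' => lf q' = ↑l) := by
        rw [Finset.mem_filter]; exact ⟨hqQ, rfl⟩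
      have hne' : ((M.image p).filter fun q' => lf q' = ↑l).Nonempty := ⟨q, hqf⟩
      obtain ⟨hmem, hmax⟩ := he1 (M.image p) l hne'
      set m := e (M.image p) l with hmdef
      have hmc : m ∈ t c := hall l
      have hml : lf m = lf q := (Finset.mem_filter.mp hmem).2
      have hm_sup : m ∈ (pth hT r (lf q)).support := hml ▸ hlf2 m
      have hq_sup : q ∈ (pth hT r (lf q)).support := hlf2 q
      have hle : (pth hT r q).length ≤ (pth hT r m).length := hmax q hqf
      rcases pth_split hT hm_sup hq_sup with hcase | hcase
      · exact hcl c r (hr c hc) m hmc _ hcase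
      · have e1 := pth_length_add hT hm_sup
        have e2 := pth_length_add hT hcase
        have e3 := pth_length_add hT hq_sup
        have hz : (pth hT m q).length = 0 := by omega
        have hmq : m = q := SimpleGraph.Walk.eq_of_length_eq_zero hz
        exact hmq ▸ hmc
  -- the injection
  set F : Finset V → (Leaf → α) := fun A =>
    if h : A.Nonempty ∧ ∃ M ⊆ periphery G C, A = anchorSet G M C then
      e ((h.2.choose).image p) else fun _ => r
    with hFdef
  have hFspec : ∀ A ∈ anchorFamily G C, A = C.filter (fun c => ∀ l : Leaf, F A l ∈ t c) := by
    intro A hA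
    rw [anchorFamily, Finset.mem_filter] at hA
    have h := hA.2
    obtain ⟨hMsub, hAeq⟩ := h.2.choose_spec
    have hFA : F A = e ((h.2.choose).image p) := by
      simp only [hFdef]; rw [dif_pos h]
    rw [hFA]
    exact hAeq.trans (key _ hMsub)
  have hinj : Set.InjOn F (anchorFamily G C : Set (Finset V)) := by
    intro A hA A' hA' hFF
    rw [hFspec A (Finset.mem_coe.mp hA), hFspec A' (Finset.mem_coe.mp hA'), hFF]
  have hcount : (anchorFamily G C).card ≤ Fintype.card (Leaf → α) := by
    have := Finset.card_le_card_of_injOn F (fun A _ => Finset.mem_univ (F A)) hinj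
    simpa using this
  have hLcard : Fintype.card Leaf = ℓ := by
    rw [← hl, leafCount]
    convert Fintype.card_subtype _ using 2
  have hfun : Fintype.card (Leaf → α) = Fintype.card α ^ ℓ := by
    rw [Fintype.card_fun, hLcard]
  calc (anchorFamily G C).card ≤ Fintype.card (Leaf → α) := hcount
    _ = Fintype.card α ^ ℓ := hfun
    _ ≤ n ^ ℓ := Nat.pow_le_pow_left hn ℓ
end

section
/- Let C be a clique and C_max ⊇ C a maximal clique in a finite graph G. For every anchor set A ∈ A_G(C), the periphery polynomial satisfies P_G(A,C,x) = (1+x)^{|C_max \ C|} · Σ_{A' ∈ A_G(C_max), A' ∩ C = A} P_G(A',C_max,x). -/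
open Polynomial Finset
open scoped Classical

variable {V : Type*}

/-- for a clique `C` inside a maximal clique `C_max` and `A ∈ A_G(C)`,
`P_G(A,C,x) = (1+x)^{|C_max \ C|} · Σ_{A' ∈ A_G(C_max), A' ∩ C = A} P_G(A',C_max,x)`. -/
theorem periphPoly_eq_of_maxClique [Fintype V] (G : SimpleGraph V) (C Cmax A : Finset V)
    (hC : G.IsClique ↑C) (hmax : IsMaxClique' G Cmax) (hsub : C ⊆ Cmax)
    (hA : A ∈ anchorFamily G C) :
    periphPoly G A C =
      (1 + X) ^ (Cmax \ C).card *
        ∑ A' ∈ (anchorFamily G Cmax).filter (fun A' => A' ∩ C = A),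
          periphPoly G A' Cmax := by
  have hclq : G.IsClique ↑Cmax := hmax.1
  simp only [anchorFamily, mem_filter, mem_univ, true_and] at hA
  obtain ⟨hAne, M0, hM0, hA0⟩ := hA
  have hAC : A ⊆ C := by
    intro x hx
    simp only [hA0, anchorSet, mem_filter] at hx
    exact hx.1
  obtain ⟨a, haA⟩ := hAne
  have haC : a ∈ C := hAC haA
  -- key splitting lemma
  have key : ∀ M : Finset V, (∀ m ∈ M, m ∉ C) →
      anchorSet G M C = anchorSet G (M \ Cmax) Cmax ∩ C := by
    intro M hM
    ext c
    simp only [anchorSet, mem_filter, mem_inter, mem_sdiff]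
    constructor
    · rintro ⟨hcC, h⟩
      exact ⟨⟨hsub hcC, fun w hw => h w hw.1⟩, hcC⟩
    · rintro ⟨⟨hcM, h⟩, hcC⟩
      refine ⟨hcC, fun w hw => ?_⟩
      by_cases hwm : w ∈ Cmax
      · exact hclq (Finset.mem_coe.mpr hwm) (Finset.mem_coe.mpr hcM)
          (fun he => hM w hw (he ▸ hcC))
      · exact h w ⟨hw, hwm⟩
  set s₁ := (periphery G Cmax).powerset.filter
      (fun M => anchorSet G M Cmax ∩ C = A) with hs₁
  have hstep2 : ∑ A' ∈ (anchorFamily G Cmax).filter (fun A' => A' ∩ C = A),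
      periphPoly G A' Cmax = ∑ M ∈ s₁, (X : Polynomial ℤ) ^ M.card := by
    rw [← Finset.sum_fiberwise_of_maps_to
      (g := fun M => anchorSet G M Cmax)
      (t := (anchorFamily G Cmax).filter (fun A' => A' ∩ C = A))
      (fun M hM => by
        rw [hs₁, mem_filter, mem_powerset] at hM
        obtain ⟨hMp, hMa⟩ := hM
        simp only [mem_filter, anchorFamily, mem_univ, true_and]
        refine ⟨⟨⟨a, ?_⟩, M, hMp, rfl⟩, hMa⟩
        have : a ∈ anchorSet G M Cmax ∩ C := hMa ▸ haA
        exact (mem_inter.mp this).1)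
      (fun M => (X : Polynomial ℤ) ^ M.card)]
    refine Finset.sum_congr rfl fun A' hA' => ?_
    rw [mem_filter] at hA'
    rw [periphPoly]
    congr 1
    rw [hs₁, filter_filter]
    apply Finset.filter_congr
    intro M _
    constructor
    · intro h; exact ⟨h ▸ hA'.2, h⟩
    · exact fun h => h.2
  have hbin : ((1 : Polynomial ℤ) + X) ^ (Cmax \ C).card
      = ∑ S ∈ (Cmax \ C).powerset, (X : Polynomial ℤ) ^ S.card := by
    rw [add_comm, ← Finset.prod_const, Finset.prod_add]
    exact Finset.sum_congr rfl fun S _ => by simp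
  rw [hstep2, hbin, Finset.sum_mul_sum, ← Finset.sum_product']
  rw [periphPoly]
  refine Finset.sum_nbij' (fun M => (M ∩ (Cmax \ C), M \ Cmax))
    (fun p => p.1 ∪ p.2) ?_ ?_ ?_ ?_ ?_
  · -- forward membership
    intro M hM
    rw [mem_filter, mem_powerset] at hM
    obtain ⟨hMp, hMa⟩ := hM
    have hMC : ∀ m ∈ M, m ∉ C := by
      intro m hm
      have := hMp hm
      rw [periphery, mem_filter] at this
      exact this.2.1
    rw [Finset.mem_product]
    constructor
    · exact mem_powerset.mpr inter_subset_right
    · rw [hs₁, mem_filter, mem_powerset]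
      constructor
      · intro w hw
        rw [mem_sdiff] at hw
        have hwp := hMp hw.1
        rw [periphery, mem_filter] at hwp ⊢
        obtain ⟨-, hwC, c, hcC, hadj⟩ := hwp
        exact ⟨mem_univ _, hw.2, c, hsub hcC, hadj⟩
      · rw [← key M hMC, hMa]
  · -- backward membership
    rintro ⟨S, M'⟩ hp
    rw [Finset.mem_product, mem_powerset, hs₁, mem_filter, mem_powerset] at hp
    obtain ⟨hS, hM'p, hM'a⟩ := hp
    have hM'out : ∀ w ∈ M', w ∉ Cmax := by
      intro w hw
      have := hM'p hw
      rw [periphery, mem_filter] at this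
      exact this.2.1
    have hSM' : (S ∪ M') \ Cmax = M' := by
      ext x
      simp only [mem_sdiff, mem_union]
      constructor
      · rintro ⟨hx | hx, hxm⟩
        · exact absurd (mem_sdiff.mp (hS hx)).1 hxm
        · exact hx
      · exact fun hx => ⟨Or.inr hx, hM'out x hx⟩
    have hMC : ∀ m ∈ S ∪ M', m ∉ C := by
      intro m hm
      rcases mem_union.mp hm with h | h
      · exact (mem_sdiff.mp (hS h)).2
      · exact fun hmC => hM'out m h (hsub hmC)
    rw [mem_filter, mem_powerset]
    constructor
    · intro v hv
      rw [periphery, mem_filter]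
      rcases mem_union.mp hv with h | h
      · have hvm := mem_sdiff.mp (hS h)
        refine ⟨mem_univ _, hvm.2, a, haC, ?_⟩
        exact hclq (Finset.mem_coe.mpr (hsub haC)) (Finset.mem_coe.mpr hvm.1)
          (fun he => hvm.2 (he ▸ haC))
      · have haM' : a ∈ anchorSet G M' Cmax := by
          have : a ∈ anchorSet G M' Cmax ∩ C := hM'a ▸ haA
          exact (mem_inter.mp this).1
        simp only [anchorSet, mem_filter] at haM'
        exact ⟨mem_univ _, fun hvC => hM'out v h (hsub hvC), a, haC,
          (haM'.2 v h).symm⟩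
    · rw [key _ hMC, hSM', hM'a]
  · -- left inverse
    intro M hM
    rw [mem_filter, mem_powerset] at hM
    have hMC : ∀ m ∈ M, m ∉ C := by
      intro m hm
      have := hM.1 hm
      rw [periphery, mem_filter] at this
      exact this.2.1
    ext x
    simp only [mem_union, mem_inter, mem_sdiff]
    constructor
    · rintro (⟨h, -⟩ | ⟨h, -⟩) <;> exact h
    · intro hx
      by_cases hxm : x ∈ Cmax
      · exact Or.inl ⟨hx, hxm, hMC x hx⟩
      · exact Or.inr ⟨hx, hxm⟩
  · -- right inverse
    rintro ⟨S, M'⟩ hp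
    rw [Finset.mem_product, mem_powerset, hs₁, mem_filter, mem_powerset] at hp
    obtain ⟨hS, hM'p, -⟩ := hp
    have hM'out : ∀ w ∈ M', w ∉ Cmax := by
      intro w hw
      have := hM'p hw
      rw [periphery, mem_filter] at this
      exact this.2.1
    have h1 : (S ∪ M') ∩ (Cmax \ C) = S := by
      ext x
      simp only [mem_inter, mem_union, mem_sdiff]
      constructor
      · rintro ⟨hx | hx, hxm, -⟩
        · exact hx
        · exact absurd hxm (hM'out x hx)
      · intro hx
        exact ⟨Or.inl hx, mem_sdiff.mp (hS hx)⟩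
    have h2 : (S ∪ M') \ Cmax = M' := by
      ext x
      simp only [mem_sdiff, mem_union]
      constructor
      · rintro ⟨hx | hx, hxm⟩
        · exact absurd (mem_sdiff.mp (hS hx)).1 hxm
        · exact hx
      · exact fun hx => ⟨Or.inr hx, hM'out x hx⟩
    simp [h1, h2]
  · -- values
    intro M hM
    rw [mem_filter, mem_powerset] at hM
    have hdisj : Disjoint (M ∩ (Cmax \ C)) (M \ Cmax) := by
      apply Finset.disjoint_left.mpr
      intro x hx hx'
      exact (mem_sdiff.mp hx').2 (mem_sdiff.mp (mem_inter.mp hx).2).1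
    have hMC : ∀ m ∈ M, m ∉ C := by
      intro m hm
      have := hM.1 hm
      rw [periphery, mem_filter] at this
      exact this.2.1
    have hunion : (M ∩ (Cmax \ C)) ∪ (M \ Cmax) = M := by
      ext x
      simp only [mem_union, mem_inter, mem_sdiff]
      constructor
      · rintro (⟨h, -⟩ | ⟨h, -⟩) <;> exact h
      · intro hx
        by_cases hxm : x ∈ Cmax
        · exact Or.inl ⟨hx, hxm, hMC x hx⟩
        · exact Or.inr ⟨hx, hxm⟩
    rw [← pow_add, ← Finset.card_union_of_disjoint hdisj, hunion]
end
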